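/- arXiv:2103.07817 — 3 statements merged into one kernel-verified Lean document; each statement's English description precedes it below -/
import Mathlib

section
/- (Induction Theorem, closure part.) Let Φ be a nonempty set of quaternions each of which is purely imaginary (re = 0) and of norm 1 (the roots of a rank-3 root system realized as pure quaternions), and let M be the multiplicative submonoid of ℍ generated by the set of products {α * β : α ∈ Φ, β ∈ Φ}. Then: (a) every g ∈ M has ‖g‖ = 1; (b) for every g ∈ M, both −g ∈ M and star g ∈ M; (c) for all g, h ∈ M, −(g * star h * g) ∈ M, so that M is invariant under the spinor reflections in its own elements; (d) for every g ∈ M and every real scalar c, if c • g ∈ M then c = 1 or c = −1. In particular M, viewed as a set of vectors in the 4D Euclidean space ℍ, satisfies both root system axioms. -/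
open scoped RealInnerProductSpace Quaternion

/-! A pure unit quaternion satisfies `star α = -α` and `α * α = -1`, so the generating set
consists of unit quaternions, is closed under `star` (`star (α * β) = β * α`) and contains `-1`;
all three properties pass to the generated monoid, and `-1 ∈ M` gives closure under negation. -/

theorem Submonoid.star_mem_closure {M : Type*} [Monoid M] [StarMul M] {s : Set M}
    (hs : ∀ x ∈ s, star x ∈ s) {x : M} (hx : x ∈ closure s) : star x ∈ closure s := by
  induction hx using closure_induction with
  | mem x hx => exact subset_closure (hs x hx)
  | one => simpa only [star_one] using one_mem _
  | mul x y _ _ hx hy => simpa only [star_mul] using mul_mem hy hx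

theorem Submonoid.norm_eq_one_of_mem_closure {R : Type*} [SeminormedRing R] [NormMulClass R]
    [NormOneClass R] {s : Set R} (hs : ∀ x ∈ s, ‖x‖ = 1) {x : R} (hx : x ∈ closure s) :
    ‖x‖ = 1 :=
  mem_sphere_zero_iff_norm.1 <|
    closure_le (S := unitSphere R) |>.2 (fun y hy ↦ mem_sphere_zero_iff_norm.2 (hs y hy)) hx

theorem Submonoid.neg_mem_of_neg_one_mem {M : Type*} [Monoid M] [HasDistribNeg M]
    {S : Submonoid M} (h : (-1 : M) ∈ S) {x : M} (hx : x ∈ S) : -x ∈ S := by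
  simpa only [neg_one_mul] using mul_mem h hx

theorem eq_one_or_eq_neg_one_of_norm_smul_eq_one {E : Type*} [SeminormedAddCommGroup E]
    [NormedSpace ℝ E] {c : ℝ} {x : E} (hx : ‖x‖ = 1) (hcx : ‖c • x‖ = 1) : c = 1 ∨ c = -1 := by
  rw [norm_smul, hx, mul_one, Real.norm_eq_abs] at hcx
  exact abs_eq zero_le_one |>.1 hcx

theorem Quaternion.mul_self_eq_neg_one {a : ℍ[ℝ]} (hre : a.re = 0) (hnorm : ‖a‖ = 1) :
    a * a = -1 := by
  rw [← sq, sq_eq_neg_normSq.2 hre, normSq_eq_norm_mul_self, hnorm, mul_one, coe_one]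

def pairProducts {R : Type*} [Mul R] (Φ : Set R) : Set R :=
  {q | ∃ α ∈ Φ, ∃ β ∈ Φ, q = α * β}

section PureUnit

variable {Φ : Set ℍ[ℝ]}

theorem norm_eq_one_of_mem_pairProducts (hnorm : ∀ α ∈ Φ, ‖α‖ = 1) {q : ℍ[ℝ]}
    (hq : q ∈ pairProducts Φ) : ‖q‖ = 1 := by
  obtain ⟨α, hα, β, hβ, rfl⟩ := hq
  rw [norm_mul, hnorm α hα, hnorm β hβ, mul_one]

theorem star_mem_pairProducts (him : ∀ α ∈ Φ, α.re = 0) {q : ℍ[ℝ]}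
    (hq : q ∈ pairProducts Φ) : star q ∈ pairProducts Φ := by
  obtain ⟨α, hα, β, hβ, rfl⟩ := hq
  refine ⟨β, hβ, α, hα, ?_⟩
  rw [star_mul, Quaternion.star_eq_neg.2 (him α hα), Quaternion.star_eq_neg.2 (him β hβ),
    neg_mul_neg]

theorem neg_one_mem_pairProducts (hne : Φ.Nonempty) (him : ∀ α ∈ Φ, α.re = 0)
    (hnorm : ∀ α ∈ Φ, ‖α‖ = 1) : (-1 : ℍ[ℝ]) ∈ pairProducts Φ := by
  obtain ⟨α, hα⟩ := hne
  exact ⟨α, hα, α, hα, (Quaternion.mul_self_eq_neg_one (him α hα) (hnorm α hα)).symm⟩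

end PureUnit

/-- Induction Theorem (closure part): the multiplicative monoid generated by products of
pairs of pure unit quaternions (the roots of a rank-3 root system) consists of unit
quaternions, contains negatives and reverses of its elements, is invariant under the
spinor reflections in its own elements, and meets each line through the origin in at most
a pair `±g`.  In particular it satisfies both root system axioms in `ℍ ≅ ℝ⁴`. -/
theorem induction_theorem_closure (Φ : Set ℍ[ℝ]) (hne : Φ.Nonempty)
    (him : ∀ α ∈ Φ, α.re = 0) (hnorm : ∀ α ∈ Φ, ‖α‖ = 1) :
    ∀ M : Submonoid ℍ[ℝ],
      M = Submonoid.closure {q : ℍ[ℝ] | ∃ α ∈ Φ, ∃ β ∈ Φ, q = α * β} →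
      (∀ g ∈ M, ‖g‖ = 1) ∧
      (∀ g ∈ M, -g ∈ M ∧ star g ∈ M) ∧
      (∀ g ∈ M, ∀ h ∈ M, -(g * star h * g) ∈ M) ∧
      (∀ g ∈ M, ∀ c : ℝ, c • g ∈ M → c = 1 ∨ c = -1) := by
  rintro M rfl
  have hunit : ∀ g ∈ Submonoid.closure (pairProducts Φ), ‖g‖ = 1 := fun _ ↦
    Submonoid.norm_eq_one_of_mem_closure fun _ ↦ norm_eq_one_of_mem_pairProducts hnorm
  have hstar : ∀ g ∈ Submonoid.closure (pairProducts Φ), star g ∈ _ := fun _ ↦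
    Submonoid.star_mem_closure fun _ ↦ star_mem_pairProducts him
  have hneg : ∀ g ∈ Submonoid.closure (pairProducts Φ), -g ∈ _ := fun _ ↦
    Submonoid.neg_mem_of_neg_one_mem <|
      Submonoid.subset_closure (neg_one_mem_pairProducts hne him hnorm)
  refine ⟨hunit, fun g hg ↦ ⟨hneg g hg, hstar g hg⟩, ?_, ?_⟩
  · exact fun g hg h hh ↦ hneg _ <| mul_mem (mul_mem hg (hstar h hh)) hg
  · exact fun g hg c hc ↦ eq_one_or_eq_neg_one_of_norm_smul_eq_one (hunit g hg) (hunit _ hc)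
end

section
/- (Induction Theorem, rank part.) Let Φ be a nonempty set of quaternions, each purely imaginary (re = 0) and of norm 1, such that every purely imaginary quaternion lies in the ℝ-linear span of Φ (i.e. Φ spans the 3-dimensional space of pure quaternions). Let M be the multiplicative submonoid of ℍ generated by {α * β : α ∈ Φ, β ∈ Φ}. Then the ℝ-linear span of M is all of ℍ; that is, the induced set of 4D vectors has rank 4. -/
open scoped Quaternion Pointwise

/-! Every quaternion is a real combination of `1, i, j, k`, and these are, up to sign, the
products `i * i, j * k, k * i, i * j` of pure quaternions. Products of two pure quaternions
lie in `span Φ * span Φ = span (Φ * Φ)`, which is contained in the span of the monoid. -/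

namespace Quaternion

variable {R : Type*} [CommRing R]

theorem eq_top_of_mul_mem_of_re_eq_zero (S : Submodule R ℍ[R])
    (hS : ∀ x y : ℍ[R], x.re = 0 → y.re = 0 → x * y ∈ S) : S = ⊤ := by
  -- `i, j, k` are kept abstract: the literals elaborate in `ℍ[R,-1,0,-1]`, where the `ℍ[R]` simp
  -- lemmas do not fire.
  obtain ⟨i, hi⟩ : ∃ i : ℍ[R], i.re = 0 ∧ i.imI = 1 ∧ i.imJ = 0 ∧ i.imK = 0 :=
    ⟨⟨0, 1, 0, 0⟩, rfl, rfl, rfl, rfl⟩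
  obtain ⟨j, hj⟩ : ∃ j : ℍ[R], j.re = 0 ∧ j.imI = 0 ∧ j.imJ = 1 ∧ j.imK = 0 :=
    ⟨⟨0, 0, 1, 0⟩, rfl, rfl, rfl, rfl⟩
  obtain ⟨k, hk⟩ : ∃ k : ℍ[R], k.re = 0 ∧ k.imI = 0 ∧ k.imJ = 0 ∧ k.imK = 1 :=
    ⟨⟨0, 0, 0, 1⟩, rfl, rfl, rfl, rfl⟩
  refine Submodule.eq_top_iff'.2 fun q => ?_
  have hq : q = (-q.re) • (i * i) + q.imI • (j * k) + q.imJ • (k * i) + q.imK • (i * j) := by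
    ext <;> simp [re_mul, imI_mul, imJ_mul, imK_mul, hi, hj, hk]
  rw [hq]
  exact S.add_mem (S.add_mem (S.add_mem (S.smul_mem _ (hS i i hi.1 hi.1))
    (S.smul_mem _ (hS j k hj.1 hk.1))) (S.smul_mem _ (hS k i hk.1 hi.1)))
    (S.smul_mem _ (hS i j hi.1 hj.1))

end Quaternion

theorem Submodule.mul_mem_span_mul {R A : Type*} [CommSemiring R] [Semiring A] [Algebra R A]
    {S T : Set A} {x y : A} (hx : x ∈ span R S) (hy : y ∈ span R T) :
    x * y ∈ span R (S * T) :=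
  span_mul_span R S T ▸ mul_mem_mul hx hy

theorem induction_theorem_rank_general (Φ : Set ℍ[ℝ])
    (hspan : ∀ x : ℍ[ℝ], x.re = 0 → x ∈ Submodule.span ℝ Φ) :
    ∀ M : Submonoid ℍ[ℝ],
      M = Submonoid.closure {q : ℍ[ℝ] | ∃ α ∈ Φ, ∃ β ∈ Φ, q = α * β} →
      Submodule.span ℝ (M : Set ℍ[ℝ]) = ⊤ := by
  rintro M rfl
  have hprod :
      Φ * Φ ⊆ (Submonoid.closure {q : ℍ[ℝ] | ∃ α ∈ Φ, ∃ β ∈ Φ, q = α * β} : Set ℍ[ℝ]) := by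
    rintro _ ⟨α, hα, β, hβ, rfl⟩
    exact Submonoid.subset_closure ⟨α, hα, β, hβ, rfl⟩
  exact Quaternion.eq_top_of_mul_mem_of_re_eq_zero _ fun x y hx hy =>
    Submodule.span_mono hprod (Submodule.mul_mem_span_mul (hspan x hx) (hspan y hy))

/-- Induction Theorem (rank part): if the pure unit quaternions `Φ` span the
3-dimensional space of purely imaginary quaternions, then the multiplicative monoid
generated by products of pairs of elements of `Φ` spans all of `ℍ`, i.e. the induced set
of 4D vectors has rank 4. -/
theorem induction_theorem_rank (Φ : Set ℍ[ℝ]) (hne : Φ.Nonempty)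
    (him : ∀ α ∈ Φ, α.re = 0) (hnorm : ∀ α ∈ Φ, ‖α‖ = 1)
    (hspan : ∀ x : ℍ[ℝ], x.re = 0 → x ∈ Submodule.span ℝ Φ) :
    ∀ M : Submonoid ℍ[ℝ],
      M = Submonoid.closure {q : ℍ[ℝ] | ∃ α ∈ Φ, ∃ β ∈ Φ, q = α * β} →
      Submodule.span ℝ (M : Set ℍ[ℝ]) = ⊤ :=
  induction_theorem_rank_general Φ hspan
end

section
/- (Spinor subgroups are 4D root systems.) Let H be a subgroup of the group of units ℍˣ of the quaternions such that every element of H has norm 1 and −1 ∈ H. Then the subset S = {(u : ℍ) : u ∈ H} of ℍ satisfies: (a) for every g ∈ S and real scalar c, if c • g ∈ S then c = 1 or c = −1, and −g ∈ S; (b) for all g, h ∈ S, −(g * star h * g) ∈ S. Hence S satisfies both root system axioms with respect to the 4D Euclidean structure of ℍ. -/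
open scoped Quaternion

theorem Quaternion.star_eq_inv_of_norm_eq_one {a : ℍ[ℝ]} (ha : ‖a‖ = 1) : star a = a⁻¹ := by
  rw [Quaternion.inv_def, Quaternion.normSq_eq_norm_mul_self, ha]
  simp

theorem eq_one_or_eq_neg_one_of_norm_smul {E : Type*} [NormedAddCommGroup E] [NormedSpace ℝ E]
    {g : E} {c : ℝ} (hg : ‖g‖ = 1) (hcg : ‖c • g‖ = 1) : c = 1 ∨ c = -1 := by
  rwa [norm_smul, hg, mul_one, Real.norm_eq_abs, abs_eq zero_le_one] at hcg

theorem Subgroup.neg_mem_of_neg_one_mem {M : Type*} [Monoid M] [HasDistribNeg M]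
    {H : Subgroup Mˣ} (hneg : -1 ∈ H) {u : Mˣ} (hu : u ∈ H) : -u ∈ H := by
  simpa using H.mul_mem hneg hu

/-- A subgroup of unit quaternions containing `−1`, viewed as a set of vectors in the
4D Euclidean space `ℍ`, satisfies both root system axioms: it meets each line through
the origin in at most the pair `±g`, contains negatives, and is closed under the spinor
reflections in its own elements. -/
theorem spinor_subgroup_root_system (H : Subgroup ℍ[ℝ]ˣ)
    (hnorm : ∀ u ∈ H, ‖(u : ℍ[ℝ])‖ = 1)
    (hneg : (-1 : ℍ[ℝ]ˣ) ∈ H) :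
    ∀ S : Set ℍ[ℝ], S = {x : ℍ[ℝ] | ∃ u ∈ H, (u : ℍ[ℝ]) = x} →
      (∀ g ∈ S, (∀ c : ℝ, c • g ∈ S → c = 1 ∨ c = -1) ∧ -g ∈ S) ∧
      (∀ g ∈ S, ∀ h ∈ S, -(g * star h * g) ∈ S) := by
  rintro S rfl
  refine ⟨?_, ?_⟩
  · rintro _ ⟨u, hu, rfl⟩
    refine ⟨?_, -u, H.neg_mem_of_neg_one_mem hneg hu, Units.val_neg u⟩
    rintro c ⟨v, hv, hvc⟩
    exact eq_one_or_eq_neg_one_of_norm_smul (hnorm u hu) (hvc ▸ hnorm v hv)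
  · rintro _ ⟨u, hu, rfl⟩ _ ⟨v, hv, rfl⟩
    -- on the unit sphere `star` is inversion, so the reflection is the group word `-(u v⁻¹ u)`
    refine ⟨-(u * v⁻¹ * u),
      H.neg_mem_of_neg_one_mem hneg (H.mul_mem (H.mul_mem hu (H.inv_mem hv)) hu), ?_⟩
    rw [Units.val_neg, Units.val_mul, Units.val_mul, Units.val_inv_eq_inv_val,
      Quaternion.star_eq_inv_of_norm_eq_one (hnorm v hv)]
end
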